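/- Let h₀ > 0, λ > 0, M ≥ 0 and g₀ ∈ ℝ. Let Ḡ : (0, h₀] × ℝ → ℝ be continuous and satisfy: (a) there is a positive continuous function ψ on (0, h₀] with ∫₀^{h₀} ψ(h) dh < ∞ and Ḡ(h, q) ≥ |q|/ψ(h) − M for all (h, q); (b) there are K > 0 and a continuous nondecreasing m₂ : [0,∞) → [0,∞) with m₂(0) = 0 such that |Ḡ(h, q) − Ḡ(h, q′)| ≤ m₂(K|q − q′|) for all h ∈ (0, h₀] and q, q′ ∈ ℝ. Let v ∈ C([0, h₀]) be a viscosity subsolution and w : [0, h₀] → ℝ a lower semicontinuous viscosity supersolution of λu + Ḡ(h, u′) = 0 in (0, h₀) together with the Dirichlet condition u(h₀) = g₀ at h₀ in the viscosity sense. If v(0) ≤ w(0), then v(h) ≤ w(h) for all h ∈ [0, h₀]. -/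
import Mathlib


open Filter Topology Set Metric MeasureTheory

noncomputable section
set_option maxHeartbeats 1000000

/-- A lower semicontinuous function on a nonempty compact set attains its minimum. -/
lemma lsc_exists_min {X : Type*} [TopologicalSpace X] {K : Set X} (hK : IsCompact K)
    (hne : K.Nonempty) {f : X → ℝ} (hf : LowerSemicontinuousOn f K) :
    ∃ x ∈ K, ∀ y ∈ K, f x ≤ f y := by
  by_contra hcon
  push_neg at hcon
  choose g hgK hglt using hcon
  have hUmem : ∀ (x : X) (hx : x ∈ K), {z | z ∈ K → f (g x hx) < f z} ∈ 𝓝 x := by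
    intro x hx
    have h1 : ∀ᶠ z in 𝓝[K] x, f (g x hx) < f z := hf x hx (f (g x hx)) (hglt x hx)
    rw [eventually_nhdsWithin_iff] at h1
    exact h1
  obtain ⟨t, ht⟩ := hK.elim_nhds_subcover' (fun x hx => {z | z ∈ K → f (g x hx) < f z}) hUmem
  obtain ⟨x₀, hx₀⟩ := hne
  have htne : t.Nonempty := by
    rcases mem_iUnion₂.1 (ht hx₀) with ⟨i, hi, _⟩
    exact ⟨i, hi⟩
  obtain ⟨i, hit, hmin⟩ := t.exists_min_image (fun i => f (g i.1 i.2)) htne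
  have hmem : g i.1 i.2 ∈ ⋃ x ∈ t, {z | z ∈ K → f (g x.1 x.2) < f z} := ht (hgK i.1 i.2)
  rcases mem_iUnion₂.1 hmem with ⟨j, hjt, hj⟩
  have h2 : f (g j.1 j.2) < f (g i.1 i.2) := hj (hgK i.1 i.2)
  exact absurd (hmin j hjt) (not_le.2 h2)

/-- One-dimensional comparison principle on `[0, h₀]`: if `v` is a
continuous viscosity subsolution and `w` a lower semicontinuous viscosity supersolution
of `λ u + Ḡ(h, u′) = 0` in `(0, h₀)` with the Dirichlet condition `u(h₀) = g₀` in the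
viscosity sense, and `v(0) ≤ w(0)`, then `v ≤ w` on `[0, h₀]`. -/
theorem comparison_on_interval
    (h₀ lam M g₀ : ℝ) (hh₀ : 0 < h₀) (hlam : 0 < lam) (hM : 0 ≤ M)
    (Gb : ℝ → ℝ → ℝ)
    (hGb : ContinuousOn (fun p : ℝ × ℝ => Gb p.1 p.2) (Ioc 0 h₀ ×ˢ (univ : Set ℝ)))
    -- (a) integrable coercivity
    (ψ : ℝ → ℝ) (hψc : ContinuousOn ψ (Ioc 0 h₀)) (hψpos : ∀ h ∈ Ioc 0 h₀, 0 < ψ h)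
    (hψint : IntegrableOn ψ (Ioo 0 h₀))
    (hcoer : ∀ h ∈ Ioc 0 h₀, ∀ q : ℝ, |q| / ψ h - M ≤ Gb h q)
    -- (b) modulus of continuity in the momentum variable
    (K : ℝ) (hK : 0 < K)
    (m₂ : ℝ → ℝ) (hm₂c : ContinuousOn m₂ (Ici 0)) (hm₂mono : MonotoneOn m₂ (Ici 0))
    (hm₂0 : m₂ 0 = 0) (hm₂nonneg : ∀ r : ℝ, 0 ≤ r → 0 ≤ m₂ r)
    (hmod : ∀ h ∈ Ioc 0 h₀, ∀ q q' : ℝ, |Gb h q - Gb h q'| ≤ m₂ (K * |q - q'|))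
    -- the subsolution `v`
    (v : ℝ → ℝ) (hvc : ContinuousOn v (Icc 0 h₀))
    (hvsub : ∀ φ : ℝ → ℝ, ContDiff ℝ 1 φ → ∀ z ∈ Ioo 0 h₀,
      IsLocalMaxOn (fun h => v h - φ h) (Ioo 0 h₀) z →
      lam * v z + Gb z (deriv φ z) ≤ 0)
    (hvbc : ∀ φ : ℝ → ℝ, ContDiff ℝ 1 φ →
      IsLocalMaxOn (fun h => v h - φ h) (Ioc 0 h₀) h₀ →
      min (lam * v h₀ + Gb h₀ (deriv φ h₀)) (v h₀ - g₀) ≤ 0)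
    -- the supersolution `w`
    (w : ℝ → ℝ) (hwc : LowerSemicontinuousOn w (Icc 0 h₀))
    (hwsup : ∀ φ : ℝ → ℝ, ContDiff ℝ 1 φ → ∀ z ∈ Ioo 0 h₀,
      IsLocalMinOn (fun h => w h - φ h) (Ioo 0 h₀) z →
      0 ≤ lam * w z + Gb z (deriv φ z))
    (hwbc : ∀ φ : ℝ → ℝ, ContDiff ℝ 1 φ →
      IsLocalMinOn (fun h => w h - φ h) (Ioc 0 h₀) h₀ →
      0 ≤ max (lam * w h₀ + Gb h₀ (deriv φ h₀)) (w h₀ - g₀))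
    (h0 : v 0 ≤ w 0) :
    ∀ h ∈ Icc 0 h₀, v h ≤ w h := by
  by_contra hcontra
  push_neg at hcontra
  obtain ⟨hb, hbI, hblt⟩ := hcontra
  have hIcpt : IsCompact (Icc (0:ℝ) h₀) := isCompact_Icc
  have hIne : (Icc (0:ℝ) h₀).Nonempty := nonempty_Icc.2 hh₀.le
  have h0I : (0:ℝ) ∈ Icc (0:ℝ) h₀ := ⟨le_refl _, hh₀.le⟩
  have hh₀I : h₀ ∈ Icc (0:ℝ) h₀ := ⟨hh₀.le, le_refl _⟩
  -- a bound for |v| on the interval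
  obtain ⟨xC, hxCI, hxCmax⟩ := hIcpt.exists_isMaxOn hIne hvc.abs
  obtain ⟨C, hCdef⟩ : ∃ c : ℝ, c = |v xC| := ⟨_, rfl⟩
  have hCb : ∀ x ∈ Icc (0:ℝ) h₀, |v x| ≤ C := by
    intro x hx
    rw [hCdef]
    exact isMaxOn_iff.mp hxCmax x hx
  have hC0 : 0 ≤ C := le_trans (abs_nonneg _) (hCb 0 h0I)
  have hMC : 0 ≤ M + lam * C := add_nonneg hM (mul_nonneg hlam.le hC0)
  -- Step 1: `v h₀ ≤ g₀`
  have hvg : v h₀ ≤ g₀ := by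
    have hhalf : (0:ℝ) < h₀ / 2 := by linarith only [hh₀]
    have hsub : Icc (h₀/2) h₀ ⊆ Ioc 0 h₀ := fun x hx => ⟨lt_of_lt_of_le hhalf hx.1, hx.2⟩
    have hsub2 : Icc (h₀/2) h₀ ⊆ Icc 0 h₀ := fun x hx => ⟨le_trans hhalf.le hx.1, hx.2⟩
    have hne2 : (Icc (h₀/2) h₀).Nonempty := nonempty_Icc.2 (by linarith only [hh₀])
    obtain ⟨sψ, hsψ, hSmax'⟩ := isCompact_Icc.exists_isMaxOn hne2 (hψc.mono hsub)
    have hSmax : ∀ x ∈ Icc (h₀/2) h₀, ψ x ≤ ψ sψ := fun x hx => isMaxOn_iff.mp hSmax' x hx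
    have hS₀pos : 0 < ψ sψ := hψpos sψ (hsub hsψ)
    obtain ⟨N, hNdef⟩ : ∃ n : ℝ, n = ψ sψ * (M + lam * C) + 4 * C / h₀ + 1 := ⟨_, rfl⟩
    have h4C : 0 ≤ 4 * C / h₀ := div_nonneg (by linarith only [hC0]) hh₀.le
    have hNpos : 0 < N := by
      have hmn := mul_nonneg hS₀pos.le hMC
      linarith only [hmn, h4C, hNdef]
    have hN1 : ψ sψ * (M + lam * C) < N := by linarith only [hNdef, h4C]
    have hN2 : 4 * C / h₀ < N := by
      have hmn := mul_nonneg hS₀pos.le hMC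
      linarith only [hmn, hNdef]
    have hcont : ContinuousOn (fun x : ℝ => v x + N * x) (Icc (h₀/2) h₀) :=
      (hvc.mono hsub2).add (continuous_const.mul continuous_id).continuousOn
    obtain ⟨z, hz, hzmax'⟩ := isCompact_Icc.exists_isMaxOn hne2 hcont
    have hzmax : ∀ x ∈ Icc (h₀/2) h₀, v x + N * x ≤ v z + N * z :=
      fun x hx => isMaxOn_iff.mp hzmax' x hx
    have hvz := abs_le.1 (hCb z (hsub2 hz))
    have hvh₀ := abs_le.1 (hCb h₀ hh₀I)
    have hz1 : N * (h₀ - z) ≤ 2 * C := by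
      have hm := hzmax h₀ ⟨(by linarith only [hh₀]), le_refl _⟩
      nlinarith only [hm, hvz, hvh₀]
    have hz2 : h₀ / 2 < z := by
      rcases lt_or_ge (h₀/2) z with h | h
      · exact h
      · exfalso
        have h4 : 4 * C < N * h₀ := (div_lt_iff₀ hh₀).1 hN2
        have h5 : N * (h₀/2) ≤ N * (h₀ - z) :=
          mul_le_mul_of_nonneg_left (by linarith only [h]) hNpos.le
        nlinarith only [h4, h5, hz1]
    have hφc : ContDiff ℝ 1 (fun h : ℝ => (-N) * h) := contDiff_const.mul contDiff_id
    have hφd : ∀ z' : ℝ, deriv (fun h : ℝ => (-N) * h) z' = -N := by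
      intro z'
      have hd : HasDerivAt (fun h : ℝ => (-N) * h) ((-N) * 1) z' := (hasDerivAt_id z').const_mul (-N)
      rw [hd.deriv]; ring
    rcases lt_or_eq_of_le hz.2 with hzlt | hzeq
    · exfalso
      have hzIoo : z ∈ Ioo 0 h₀ := ⟨lt_trans hhalf hz2, hzlt⟩
      have hloc : IsLocalMaxOn (fun h => v h - (-N) * h) (Ioo 0 h₀) z := by
        have hO : Ioi (h₀/2) ∈ 𝓝[Ioo 0 h₀] z := nhdsWithin_le_nhds (isOpen_Ioi.mem_nhds hz2)
        exact Filter.eventually_of_mem (inter_mem hO self_mem_nhdsWithin)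
          (fun x hx => by
            have hm := hzmax x ⟨le_of_lt hx.1, le_of_lt hx.2.2⟩
            show v x - (-N) * x ≤ v z - (-N) * z
            linarith only [hm])
      have hA := hvsub _ hφc z hzIoo hloc
      rw [hφd] at hA
      have hco := hcoer z (hsub ⟨hz2.le, hz.2⟩) (-N)
      rw [abs_neg, abs_of_pos hNpos] at hco
      have hψz : 0 < ψ z := hψpos z (hsub ⟨hz2.le, hz.2⟩)
      have hdiv : N / ψ z ≤ M + lam * C := by
        have hprod : 0 ≤ lam * (v z + C) := mul_nonneg hlam.le (by linarith only [hvz.1])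
        nlinarith only [hco, hA, hprod]
      have hNle : N ≤ (M + lam * C) * ψ z := (div_le_iff₀ hψz).1 hdiv
      have hψzS : ψ z ≤ ψ sψ := hSmax z ⟨hz2.le, hz.2⟩
      nlinarith only [hNle, hN1, mul_le_mul_of_nonneg_left hψzS hMC]
    · -- z = h₀
      have hloc : IsLocalMaxOn (fun h => v h - (-N) * h) (Ioc 0 h₀) h₀ := by
        have hO : Ioi (h₀/2) ∈ 𝓝[Ioc 0 h₀] h₀ :=
          nhdsWithin_le_nhds (isOpen_Ioi.mem_nhds (mem_Ioi.2 (by linarith only [hh₀])))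
        exact Filter.eventually_of_mem (inter_mem hO self_mem_nhdsWithin)
          (fun x hx => by
            have hm := hzmax x ⟨le_of_lt hx.1, hx.2.2⟩
            show v x - (-N) * x ≤ v h₀ - (-N) * h₀
            rw [← hzeq]
            linarith only [hm])
      have hbmin := hvbc _ hφc hloc
      rw [hφd] at hbmin
      have hco := hcoer h₀ ⟨hh₀, le_refl _⟩ (-N)
      rw [abs_neg, abs_of_pos hNpos] at hco
      have hψh : 0 < ψ h₀ := hψpos h₀ ⟨hh₀, le_refl _⟩
      have hψhS : ψ h₀ ≤ ψ sψ := hSmax h₀ ⟨(by linarith only [hh₀]), le_refl _⟩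
      have hNgt : ψ h₀ * (M + lam * C) < N := by
        nlinarith only [hN1, mul_le_mul_of_nonneg_right hψhS hMC]
      have hdivgt : M + lam * C < N / ψ h₀ :=
        (lt_div_iff₀ hψh).2 (by nlinarith only [hNgt])
      have hgt : 0 < lam * v h₀ + Gb h₀ (-N) := by
        have hprod : 0 ≤ lam * (v h₀ + C) := mul_nonneg hlam.le (by linarith only [hvh₀.1])
        nlinarith only [hco, hdivgt, hprod]
      rcases min_le_iff.1 hbmin with h | h
      · linarith only [h, hgt]
      · linarith only [h]
  -- Step 2: maximum of `v - w`
  have hwvlsc : LowerSemicontinuousOn (fun x => w x + (-(v x))) (Icc (0:ℝ) h₀) :=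
    hwc.add hvc.neg.lowerSemicontinuousOn
  obtain ⟨xs, hxsI, hxsmin⟩ := lsc_exists_min hIcpt hIne hwvlsc
  obtain ⟨σ, hσdef⟩ : ∃ s : ℝ, s = v xs - w xs := ⟨_, rfl⟩
  have hσmax : ∀ y ∈ Icc (0:ℝ) h₀, v y - w y ≤ σ := by
    intro y hy
    have h1 : w xs + (-(v xs)) ≤ w y + (-(v y)) := hxsmin y hy
    rw [hσdef]; linarith only [h1]
  have hσpos : 0 < σ := lt_of_lt_of_le (sub_pos.2 hblt) (hσmax hb hbI)
  have hxs0 : 0 < xs := by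
    rcases eq_or_lt_of_le hxsI.1 with h | h
    · exfalso
      have hle : σ ≤ 0 := by rw [hσdef, ← h]; linarith only [h0]
      linarith only [hle, hσpos]
    · exact h
  -- minimum of `w`
  obtain ⟨yw, hywI, hywmin⟩ := lsc_exists_min hIcpt hIne hwc
  obtain ⟨C₀, hC₀def⟩ : ∃ c : ℝ, c = C + |w yw| + 1 := ⟨_, rfl⟩
  have hC₀pos : 0 < C₀ := by
    have habs := abs_nonneg (w yw)
    linarith only [hC₀def, habs, hC0]
  -- behavior near 0
  obtain ⟨δ1, hδ1, hδ1H⟩ := Metric.continuousWithinAt_iff.1 (hvc 0 h0I) (σ/8)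
    (by linarith only [hσpos])
  have hwev : ∀ᶠ x in 𝓝[Icc (0:ℝ) h₀] 0, w 0 - σ/8 < w x :=
    hwc 0 h0I (w 0 - σ/8) (by linarith only [hσpos])
  obtain ⟨δ2, hδ2, hδ2H⟩ := Metric.mem_nhdsWithin_iff.1 hwev
  obtain ⟨δ, hδdef⟩ : ∃ dd : ℝ, dd = min (min δ1 δ2) h₀ := ⟨_, rfl⟩
  have hδpos : 0 < δ := by rw [hδdef]; exact lt_min (lt_min hδ1 hδ2) hh₀
  have hδh₀ : δ ≤ h₀ := by rw [hδdef]; exact min_le_right _ _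
  have hδδ1 : δ ≤ δ1 := by rw [hδdef]; exact le_trans (min_le_left _ _) (min_le_left _ _)
  have hδδ2 : δ ≤ δ2 := by rw [hδdef]; exact le_trans (min_le_left _ _) (min_le_right _ _)
  -- uniform continuity of `v`
  obtain ⟨β₀, hβ₀, hβ₀H⟩ := Metric.uniformContinuousOn_iff.1
    (hIcpt.uniformContinuousOn_of_continuous hvc) (σ/8) (by linarith only [hσpos])
  -- the relevant compact region and constants
  obtain ⟨a, hadef⟩ : ∃ aa : ℝ, aa = δ/4 := ⟨_, rfl⟩
  have hapos : 0 < a := by rw [hadef]; linarith only [hδpos]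
  have hah₀ : a ≤ h₀ := by rw [hadef]; linarith only [hδpos, hδh₀]
  have hsubA : Icc a h₀ ⊆ Ioc 0 h₀ := fun x hx => ⟨lt_of_lt_of_le hapos hx.1, hx.2⟩
  obtain ⟨sψ2, hsψ2, hS2max'⟩ := isCompact_Icc.exists_isMaxOn (nonempty_Icc.2 hah₀) (hψc.mono hsubA)
  obtain ⟨S, hSdef⟩ : ∃ s : ℝ, s = ψ sψ2 := ⟨_, rfl⟩
  have hS2max : ∀ x ∈ Icc a h₀, ψ x ≤ S := by
    intro x hx
    rw [hSdef]
    exact isMaxOn_iff.mp hS2max' x hx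
  have hSpos : 0 < S := by rw [hSdef]; exact hψpos sψ2 (hsubA hsψ2)
  obtain ⟨L, hLdef⟩ : ∃ l : ℝ, l = S * (M + lam * C) := ⟨_, rfl⟩
  have hL0 : 0 ≤ L := by rw [hLdef]; exact mul_nonneg hSpos.le hMC
  have hKcsub : Icc a h₀ ×ˢ Icc (-L) L ⊆ Ioc 0 h₀ ×ˢ (univ : Set ℝ) :=
    prod_mono hsubA (subset_univ _)
  obtain ⟨d, hd, hdH⟩ := Metric.uniformContinuousOn_iff.1
    (((isCompact_Icc.prod isCompact_Icc).uniformContinuousOn_of_continuous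
      (hGb.mono hKcsub))) (lam*σ/4) (by linarith only [mul_pos hlam hσpos])
  -- choice of the shift β and the penalization parameter ε
  obtain ⟨β, hβdef⟩ : ∃ b : ℝ, b = min (min (δ/8) (d/4)) (min (β₀/2) xs) := ⟨_, rfl⟩
  have hβpos : 0 < β := by
    rw [hβdef]
    exact lt_min (lt_min (by linarith only [hδpos]) (by linarith only [hd]))
      (lt_min (by linarith only [hβ₀]) hxs0)
  have hβδ : β ≤ δ/8 := by rw [hβdef]; exact le_trans (min_le_left _ _) (min_le_left _ _)
  have hβd : β ≤ d/4 := by rw [hβdef]; exact le_trans (min_le_left _ _) (min_le_right _ _)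
  have hββ₀ : β ≤ β₀/2 := by rw [hβdef]; exact le_trans (min_le_right _ _) (min_le_left _ _)
  have hβxs : β ≤ xs := by rw [hβdef]; exact le_trans (min_le_right _ _) (min_le_right _ _)
  obtain ⟨ε, hεdef⟩ : ∃ e : ℝ, e = β^2/(8*C₀) := ⟨_, rfl⟩
  have hεpos : 0 < ε := by
    rw [hεdef]
    exact div_pos (pow_pos hβpos 2) (by linarith only [hC₀pos])
  -- the doubled functional attains a minimum
  have hF1 : LowerSemicontinuousOn (fun p : ℝ×ℝ => w p.2) (Icc (0:ℝ) h₀ ×ˢ Icc (0:ℝ) h₀) := by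
    intro p hp c hc
    have h1 := hwc p.2 hp.2 c hc
    have h2 : Tendsto (fun q : ℝ×ℝ => q.2) (𝓝[Icc (0:ℝ) h₀ ×ˢ Icc (0:ℝ) h₀] p)
        (𝓝[Icc (0:ℝ) h₀] p.2) :=
      continuous_snd.continuousWithinAt.tendsto_nhdsWithin (fun q hq => hq.2)
    exact h2.eventually h1
  have hF2 : ContinuousOn (fun p : ℝ×ℝ => (p.1 - p.2 + β)^2/(2*ε) - v p.1)
      (Icc (0:ℝ) h₀ ×ˢ Icc (0:ℝ) h₀) :=
    ((((continuous_fst.sub continuous_snd).add continuous_const).pow 2).div_const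
      _).continuousOn.sub (hvc.comp continuous_fst.continuousOn (fun q hq => hq.1))
  obtain ⟨pe, hpeS, hpemin⟩ := lsc_exists_min (hIcpt.prod hIcpt)
    ⟨(0,0), mk_mem_prod h0I h0I⟩ (hF1.add hF2.lowerSemicontinuousOn)
  obtain ⟨xe, ye⟩ := pe
  obtain ⟨hxeI, hyeI⟩ := hpeS
  have hxeI : xe ∈ Icc (0:ℝ) h₀ := hxeI
  have hyeI : ye ∈ Icc (0:ℝ) h₀ := hyeI
  have hkey : ∀ x ∈ Icc (0:ℝ) h₀, ∀ y ∈ Icc (0:ℝ) h₀,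
      v x - w y - (x - y + β)^2/(2*ε) ≤ v xe - w ye - (xe - ye + β)^2/(2*ε) := by
    intro x hx y hy
    have h1 : w ye + ((xe - ye + β)^2/(2*ε) - v xe) ≤ w y + ((x - y + β)^2/(2*ε) - v x) :=
      hpemin (x, y) (mk_mem_prod hx hy)
    linarith only [h1]
  -- lower bound on the value of the doubled functional
  have hxsβI : xs - β ∈ Icc (0:ℝ) h₀ :=
    ⟨by linarith only [hβxs], by linarith only [hxsI.2, hβpos]⟩
  have hvclose : |v (xs - β) - v xs| < σ/8 := by
    have hdist : dist (xs - β) xs < β₀ := by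
      rw [Real.dist_eq]
      have he : xs - β - xs = -β := by ring
      rw [he, abs_neg, abs_of_pos hβpos]
      linarith only [hββ₀, hβ₀]
    have hcl := hβ₀H (xs - β) hxsβI xs hxsI hdist
    rwa [Real.dist_eq] at hcl
  have hMlb : 7*σ/8 ≤ v xe - w ye - (xe - ye + β)^2/(2*ε) := by
    have h1 := hkey (xs - β) hxsβI xs hxsI
    have h2 : (xs - β - xs + β)^2/(2*ε) = 0 := by
      have he : xs - β - xs + β = 0 := by ring
      rw [he]
      simp
    rw [h2] at h1
    have h3 := (abs_lt.1 hvclose).1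
    linarith only [h1, h3, hσdef]
  have hpen0 : 0 ≤ (xe - ye + β)^2/(2*ε) :=
    div_nonneg (sq_nonneg _) (by linarith only [hεpos])
  -- penalization estimate
  have hpenlt : (xe - ye + β)^2 ≤ β^2/4 := by
    have h1 := (abs_le.1 (hCb xe hxeI)).2
    have h2 : w yw ≤ w ye := hywmin ye hyeI
    have h3 : -|w yw| ≤ w yw := neg_abs_le _
    have h4 : (xe - ye + β)^2/(2*ε) ≤ C₀ := by
      rw [hC₀def]
      linarith only [hMlb, h1, h2, h3, hσpos]
    have h5 : C₀ * (2*ε) = β^2/4 := by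
      rw [hεdef]
      field_simp
      ring
    calc (xe - ye + β)^2 = ((xe - ye + β)^2/(2*ε)) * (2*ε) :=
          (div_mul_cancel₀ _ (ne_of_gt (by linarith only [hεpos] : (0:ℝ) < 2*ε))).symm
    _ ≤ C₀ * (2*ε) := mul_le_mul_of_nonneg_right h4 (by linarith only [hεpos])
    _ = β^2/4 := h5
  have hq1 : xe - ye + β ≤ β/2 := by
    nlinarith only [hpenlt, hβpos, sq_nonneg (xe - ye + β - β/2), sq_nonneg (xe - ye + β + β/2)]
  have hq2 : -(β/2) ≤ xe - ye + β := by
    nlinarith only [hpenlt, hβpos, sq_nonneg (xe - ye + β - β/2), sq_nonneg (xe - ye + β + β/2)]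
  -- the points stay away from 0
  have hyeδ : δ/2 ≤ ye := by
    by_contra hcon2
    push_neg at hcon2
    have hxeδ : xe < δ/2 := by linarith only [hq1, hcon2, hβpos]
    have hv0 : dist (v xe) (v 0) < σ/8 := hδ1H hxeI
      (by rw [Real.dist_eq, sub_zero, abs_of_nonneg hxeI.1]
          linarith only [hxeδ, hδδ1, hδpos])
    rw [Real.dist_eq] at hv0
    have hball : ye ∈ ball (0:ℝ) δ2 := by
      rw [mem_ball, Real.dist_eq, sub_zero, abs_of_nonneg hyeI.1]
      linarith only [hcon2, hδδ2, hδpos]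
    have hw0 : w 0 - σ/8 < w ye := hδ2H ⟨hball, hyeI⟩
    have h1 := (abs_lt.1 hv0).2
    linarith only [hMlb, hpen0, h1, hw0, h0, hσpos, hσdef]
  have hxea : a ≤ xe := by
    rw [hadef]
    linarith only [hq2, hyeδ, hβδ, hδpos]
  have hxelt : xe < h₀ := by linarith only [hyeI.2, hβpos, hq1]
  have hxeIoo : xe ∈ Ioo 0 h₀ := ⟨lt_of_lt_of_le hapos hxea, hxelt⟩
  have hxeIoc : xe ∈ Ioc 0 h₀ := ⟨hxeIoo.1, hxelt.le⟩
  -- the subsolution inequality at xe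
  obtain ⟨p, hpdef⟩ : ∃ q : ℝ, q = (xe - ye + β)/ε := ⟨_, rfl⟩
  have hφ₁c : ContDiff ℝ 1 (fun x : ℝ => (x - ye + β)^2/(2*ε)) :=
    (((contDiff_id.sub contDiff_const).add contDiff_const).pow 2).div_const _
  have hφ₁d : deriv (fun x : ℝ => (x - ye + β)^2/(2*ε)) xe = p := by
    have h0' : HasDerivAt (fun x : ℝ => x - ye + β) 1 xe :=
      ((hasDerivAt_id xe).sub_const ye).add_const β
    have hder : HasDerivAt (fun x : ℝ => (x - ye + β)^2/(2*ε))
        ((2:ℕ) * (xe - ye + β)^(2-1) * 1/(2*ε)) xe := (h0'.pow 2).div_const (2*ε)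
    rw [hder.deriv, hpdef]
    field_simp
    ring
  have hloc₁ : IsLocalMaxOn (fun h => v h - (h - ye + β)^2/(2*ε)) (Ioo 0 h₀) xe := by
    apply Filter.eventually_of_mem self_mem_nhdsWithin
    intro x hx
    have hxI : x ∈ Icc (0:ℝ) h₀ := ⟨hx.1.le, hx.2.le⟩
    have hk := hkey x hxI ye hyeI
    show v x - (x - ye + β)^2/(2*ε) ≤ v xe - (xe - ye + β)^2/(2*ε)
    linarith only [hk]
  have hA := hvsub _ hφ₁c xe hxeIoo hloc₁
  rw [hφ₁d] at hA
  -- the momentum is bounded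
  have hvxe := abs_le.1 (hCb xe hxeI)
  have hco := hcoer xe hxeIoc p
  have hψxe : 0 < ψ xe := hψpos xe hxeIoc
  have hdiv : |p|/ψ xe ≤ M + lam * C := by
    have hprod : 0 ≤ lam * (v xe + C) := mul_nonneg hlam.le (by linarith only [hvxe.1])
    nlinarith only [hco, hA, hprod]
  have hple : |p| ≤ (M + lam * C) * ψ xe := (div_le_iff₀ hψxe).1 hdiv
  have hψxeS : ψ xe ≤ S := hS2max xe ⟨hxea, hxelt.le⟩
  have hpL : |p| ≤ L := by
    rw [hLdef]
    nlinarith only [hple, mul_le_mul_of_nonneg_left hψxeS hMC]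
  have hpmem : p ∈ Icc (-L) L := ⟨(abs_le.1 hpL).1, (abs_le.1 hpL).2⟩
  -- the supersolution inequality at ye
  have hφ₂c : ContDiff ℝ 1 (fun y : ℝ => -((xe - y + β)^2/(2*ε))) :=
    ((((contDiff_const.sub contDiff_id).add contDiff_const).pow 2).div_const _).neg
  have hφ₂d : ∀ y' : ℝ, deriv (fun y : ℝ => -((xe - y + β)^2/(2*ε))) y' = (xe - y' + β)/ε := by
    intro y'
    have h0' : HasDerivAt (fun y : ℝ => xe - y + β) (-1) y' :=
      ((hasDerivAt_id y').const_sub xe).add_const β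
    have hder : HasDerivAt (fun y : ℝ => -((xe - y + β)^2/(2*ε)))
        (-((2:ℕ) * (xe - y' + β)^(2-1) * (-1)/(2*ε))) y' := ((h0'.pow 2).div_const (2*ε)).neg
    rw [hder.deriv]
    field_simp
    ring
  have hwmin₂ : ∀ y ∈ Icc (0:ℝ) h₀,
      w ye - -((xe - ye + β)^2/(2*ε)) ≤ w y - -((xe - y + β)^2/(2*ε)) := by
    intro y hy
    have hk := hkey xe hxeI y hy
    linarith only [hk]
  have hsup2 : 0 ≤ lam * w ye + Gb ye p ∨ (ye = h₀ ∧ g₀ ≤ w ye) := by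
    rcases lt_or_eq_of_le hyeI.2 with hyelt | hyeeq
    · left
      have hyeIoo : ye ∈ Ioo 0 h₀ := ⟨by linarith only [hyeδ, hδpos], hyelt⟩
      have hloc₂ : IsLocalMinOn (fun h => w h - -((xe - h + β)^2/(2*ε))) (Ioo 0 h₀) ye := by
        apply Filter.eventually_of_mem self_mem_nhdsWithin
        intro y hy
        exact hwmin₂ y ⟨hy.1.le, hy.2.le⟩
      have hB := hwsup _ hφ₂c ye hyeIoo hloc₂
      rw [hφ₂d ye, ← hpdef] at hB
      exact hB
    · have hloc₂ : IsLocalMinOn (fun h => w h - -((xe - h + β)^2/(2*ε))) (Ioc 0 h₀) h₀ := by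
        apply Filter.eventually_of_mem self_mem_nhdsWithin
        intro y hy
        have h1 := hwmin₂ y ⟨hy.1.le, hy.2⟩
        show w h₀ - -((xe - h₀ + β)^2/(2*ε)) ≤ w y - -((xe - y + β)^2/(2*ε))
        rw [← hyeeq]
        exact h1
      have hb2 := hwbc _ hφ₂c hloc₂
      rw [hφ₂d h₀] at hb2
      have hpe : (xe - h₀ + β)/ε = p := by rw [hpdef, hyeeq]
      rw [hpe] at hb2
      rcases le_max_iff.1 hb2 with h | h
      · left
        rw [hyeeq]
        exact h
      · right
        exact ⟨hyeeq, by rw [hyeeq]; linarith only [h]⟩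
  rcases hsup2 with hB | ⟨hyeeq, hg⟩
  · -- the PDE holds for the supersolution at `ye`: uniform-continuity contradiction
    have hyeKc : ((ye, p) : ℝ×ℝ) ∈ Icc a h₀ ×ˢ Icc (-L) L :=
      mk_mem_prod ⟨by rw [hadef]; linarith only [hyeδ, hδpos], hyeI.2⟩ hpmem
    have hxeKc : ((xe, p) : ℝ×ℝ) ∈ Icc a h₀ ×ˢ Icc (-L) L :=
      mk_mem_prod ⟨hxea, hxelt.le⟩ hpmem
    have hdist : dist ((ye, p) : ℝ×ℝ) ((xe, p) : ℝ×ℝ) < d := by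
      rw [Prod.dist_eq, dist_self]
      have h2 : dist ye xe < d := by
        rw [Real.dist_eq, abs_lt]
        constructor
        · linarith only [hq1, hβpos, hd]
        · linarith only [hq2, hβd, hd]
      exact max_lt h2 hd
    have hGclose := hdH (ye, p) hyeKc (xe, p) hxeKc hdist
    rw [Real.dist_eq] at hGclose
    have hGlt := (abs_lt.1 hGclose).2
    have e2 : 7*σ/8 ≤ v xe - w ye := by linarith only [hMlb, hpen0]
    have e3 : lam * (7*σ/8) ≤ lam * (v xe - w ye) := mul_le_mul_of_nonneg_left e2 hlam.le
    have e1 : lam * (v xe - w ye) ≤ Gb ye p - Gb xe p := by nlinarith only [hA, hB]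
    linarith only [e1, e3, hGlt, mul_pos hlam hσpos]
  · -- the Dirichlet branch holds at `h₀`
    have h1 : 7*σ/8 + w ye ≤ v xe := by linarith only [hMlb, hpen0]
    have h2 : v h₀ ≤ w ye := le_trans hvg hg
    have hdist : dist xe h₀ < β₀ := by
      rw [Real.dist_eq, ← hyeeq, abs_lt]
      constructor
      · linarith only [hq2, hββ₀, hβ₀, hβpos]
      · linarith only [hq1, hβpos, hβ₀]
    have hvclose2 := hβ₀H xe hxeI h₀ hh₀I hdist
    rw [Real.dist_eq] at hvclose2
    have h3 := (abs_lt.1 hvclose2).2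
    linarith only [h1, h2, h3, hσpos]
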